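/- If U is a unitary on n qubits built from a circuit over the gate set {H, S, T, CX} containing N_H Hadamard gates, then H_{CBC,0}((U⊗U*)|O⟩) ≤ 2 N_H + H_{CBC,0}(|O⟩), i.e., the computational-basis support of the vectorization grows by at most a factor 4 per Hadamard gate. -/
import Mathlib


open scoped BigOperators
open Matrix

/-- The single-qubit Hadamard gate. -/
noncomputable def Hmat : Matrix (Fin 2) (Fin 2) ℂ :=
  (((Real.sqrt 2 : ℝ) : ℂ)⁻¹) • !![1, 1; 1, -1]

/-- The single-qubit phase gate `S`. -/
noncomputable def Smat : Matrix (Fin 2) (Fin 2) ℂ := !![1, 0; 0, Complex.I]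

/-- The single-qubit `T` gate. -/
noncomputable def Tmat : Matrix (Fin 2) (Fin 2) ℂ :=
  !![1, 0; 0, Complex.exp (Complex.I * Real.pi / 4)]

/-- A single-qubit gate `g` acting on qubit `q` of an `n`-qubit register. -/
noncomputable def applyOn (n : ℕ) (g : Matrix (Fin 2) (Fin 2) ℂ) (q : Fin n) :
    Matrix (Fin n → Fin 2) (Fin n → Fin 2) ℂ :=
  fun i j => g (i q) (j q) * ∏ t ∈ Finset.univ.erase q, (if i t = j t then 1 else 0)

/-- The CNOT gate with control `c` and target `t` on an `n`-qubit register. -/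
noncomputable def cxOn (n : ℕ) (c t : Fin n) :
    Matrix (Fin n → Fin 2) (Fin n → Fin 2) ℂ :=
  fun i j => (if i t = j t + j c then 1 else 0) *
    ∏ u ∈ Finset.univ.erase t, (if i u = j u then 1 else 0)

/-- Gates from the universal gate set `{H, S, T, CX}` on `n` qubits. -/
inductive Gate (n : ℕ)
  | Hg (q : Fin n)
  | Sg (q : Fin n)
  | Tg (q : Fin n)
  | CXg (c t : Fin n)

/-- The unitary matrix of a gate. -/
noncomputable def Gate.toMatrix {n : ℕ} :
    Gate n → Matrix (Fin n → Fin 2) (Fin n → Fin 2) ℂ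
  | .Hg q => applyOn n Hmat q
  | .Sg q => applyOn n Smat q
  | .Tg q => applyOn n Tmat q
  | .CXg c t => cxOn n c t

/-- Whether a gate is a Hadamard gate. -/
def Gate.isH {n : ℕ} : Gate n → Bool
  | .Hg _ => true
  | _ => false

/-- The unitary implemented by a circuit (a list of gates). -/
noncomputable def circuitUnitary {n : ℕ} (L : List (Gate n)) :
    Matrix (Fin n → Fin 2) (Fin n → Fin 2) ℂ :=
  (L.map Gate.toMatrix).prod

section Aux

variable {n : ℕ}

private lemma exists_witness (M A : Matrix (Fin n → Fin 2) (Fin n → Fin 2) ℂ)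
    (i j : Fin n → Fin 2) (h : (M * A * Mᴴ) i j ≠ 0) :
    ∃ k l, M i k ≠ 0 ∧ M j l ≠ 0 ∧ A k l ≠ 0 := by
  by_contra hc
  push_neg at hc
  apply h
  rw [Matrix.mul_apply]
  apply Finset.sum_eq_zero
  intro k _
  rw [Matrix.mul_apply, Matrix.conjTranspose_apply, Finset.sum_mul]
  apply Finset.sum_eq_zero
  intro l _
  by_cases h1 : M i l = 0
  · rw [h1]; ring
  by_cases h2 : M j k = 0
  · rw [h2]; simp
  rw [hc l k h1 h2]; ring

private lemma perm_bound (M A : Matrix (Fin n → Fin 2) (Fin n → Fin 2) ℂ)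
    (f : (Fin n → Fin 2) → (Fin n → Fin 2))
    (hM : ∀ i k, M i k ≠ 0 → i = f k) :
    {x : (Fin n → Fin 2) × (Fin n → Fin 2) | (M * A * Mᴴ) x.1 x.2 ≠ 0}.ncard ≤
      {x : (Fin n → Fin 2) × (Fin n → Fin 2) | A x.1 x.2 ≠ 0}.ncard := by
  have hsub : {x : (Fin n → Fin 2) × (Fin n → Fin 2) | (M * A * Mᴴ) x.1 x.2 ≠ 0} ⊆
      (fun p : (Fin n → Fin 2) × (Fin n → Fin 2) => (f p.1, f p.2)) ''
        {x : (Fin n → Fin 2) × (Fin n → Fin 2) | A x.1 x.2 ≠ 0} := by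
    rintro ⟨i, j⟩ h
    obtain ⟨k, l, h1, h2, h3⟩ := exists_witness M A i j h
    exact ⟨(k, l), h3, by simp [← hM i k h1, ← hM j l h2]⟩
  exact le_trans (Set.ncard_le_ncard hsub (Set.toFinite _)) (Set.ncard_image_le (Set.toFinite _))

private lemma h_bound (M A : Matrix (Fin n → Fin 2) (Fin n → Fin 2) ℂ) (q : Fin n)
    (hM : ∀ i k, M i k ≠ 0 → ∃ a, i = Function.update k q a) :
    {x : (Fin n → Fin 2) × (Fin n → Fin 2) | (M * A * Mᴴ) x.1 x.2 ≠ 0}.ncard ≤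
      4 * {x : (Fin n → Fin 2) × (Fin n → Fin 2) | A x.1 x.2 ≠ 0}.ncard := by
  set S := {x : (Fin n → Fin 2) × (Fin n → Fin 2) | A x.1 x.2 ≠ 0} with hS
  let g : Fin 2 → Fin 2 → ((Fin n → Fin 2) × (Fin n → Fin 2)) → ((Fin n → Fin 2) × (Fin n → Fin 2)) :=
    fun a b p => (Function.update p.1 q a, Function.update p.2 q b)
  have hsub : {x : (Fin n → Fin 2) × (Fin n → Fin 2) | (M * A * Mᴴ) x.1 x.2 ≠ 0} ⊆
      (g 0 0 '' S ∪ g 0 1 '' S) ∪ (g 1 0 '' S ∪ g 1 1 '' S) := by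
    rintro ⟨i, j⟩ h
    obtain ⟨k, l, h1, h2, h3⟩ := exists_witness M A i j h
    obtain ⟨a, ha⟩ := hM i k h1
    obtain ⟨b, hb⟩ := hM j l h2
    have hmem : ((k, l) : (Fin n → Fin 2) × (Fin n → Fin 2)) ∈ S := h3
    have himg : (i, j) ∈ g a b '' S := ⟨(k, l), hmem, by simp [g, ← ha, ← hb]⟩
    fin_cases a <;> fin_cases b <;>
      first
        | exact Or.inl (Or.inl himg)
        | exact Or.inl (Or.inr himg)
        | exact Or.inr (Or.inl himg)
        | exact Or.inr (Or.inr himg)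
  have himgle : ∀ a b : Fin 2, (g a b '' S).ncard ≤ S.ncard :=
    fun a b => Set.ncard_image_le (Set.toFinite _)
  calc {x : (Fin n → Fin 2) × (Fin n → Fin 2) | (M * A * Mᴴ) x.1 x.2 ≠ 0}.ncard
      ≤ ((g 0 0 '' S ∪ g 0 1 '' S) ∪ (g 1 0 '' S ∪ g 1 1 '' S)).ncard :=
        Set.ncard_le_ncard hsub (Set.toFinite _)
    _ ≤ (g 0 0 '' S ∪ g 0 1 '' S).ncard + (g 1 0 '' S ∪ g 1 1 '' S).ncard :=
        Set.ncard_union_le _ _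
    _ ≤ ((g 0 0 '' S).ncard + (g 0 1 '' S).ncard) + ((g 1 0 '' S).ncard + (g 1 1 '' S).ncard) :=
        add_le_add (Set.ncard_union_le _ _) (Set.ncard_union_le _ _)
    _ ≤ (S.ncard + S.ncard) + (S.ncard + S.ncard) :=
        add_le_add (add_le_add (himgle _ _) (himgle _ _)) (add_le_add (himgle _ _) (himgle _ _))
    _ = 4 * S.ncard := by ring

private lemma applyOn_offdiag_agree (gm : Matrix (Fin 2) (Fin 2) ℂ) (q : Fin n)
    (i k : Fin n → Fin 2) (h : applyOn n gm q i k ≠ 0) : ∀ t, t ≠ q → i t = k t := by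
  intro t ht
  by_contra hne
  apply h
  unfold applyOn
  exact mul_eq_zero_of_right _
    (Finset.prod_eq_zero (Finset.mem_erase.mpr ⟨ht, Finset.mem_univ t⟩) (if_neg hne))

private lemma applyOn_H_prop (q : Fin n) (i k : Fin n → Fin 2)
    (h : applyOn n Hmat q i k ≠ 0) : ∃ a, i = Function.update k q a := by
  refine ⟨i q, funext fun t => ?_⟩
  by_cases ht : t = q
  · subst ht; simp
  · rw [Function.update_of_ne ht]; exact applyOn_offdiag_agree _ _ _ _ h t ht

private lemma diag_prop (gm : Matrix (Fin 2) (Fin 2) ℂ)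
    (hdiag : ∀ a b : Fin 2, a ≠ b → gm a b = 0) (q : Fin n) (i k : Fin n → Fin 2)
    (h : applyOn n gm q i k ≠ 0) : i = k := by
  funext t
  by_cases ht : t = q
  · subst ht
    by_contra hne
    apply h
    unfold applyOn
    rw [hdiag _ _ hne]
    ring
  · exact applyOn_offdiag_agree _ _ _ _ h t ht

private lemma Smat_offdiag : ∀ a b : Fin 2, a ≠ b → Smat a b = 0 := by
  intro a b hab
  fin_cases a <;> fin_cases b <;> simp_all [Smat]

private lemma Tmat_offdiag : ∀ a b : Fin 2, a ≠ b → Tmat a b = 0 := by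
  intro a b hab
  fin_cases a <;> fin_cases b <;> simp_all [Tmat]

private lemma cx_prop (c t : Fin n) (i k : Fin n → Fin 2) (h : cxOn n c t i k ≠ 0) :
    i = Function.update k t (k t + k c) := by
  have h1 : i t = k t + k c := by
    by_contra hne
    apply h
    unfold cxOn
    rw [if_neg hne]
    ring
  have h2 : ∀ u, u ≠ t → i u = k u := by
    intro u hu
    by_contra hne
    apply h
    unfold cxOn
    exact mul_eq_zero_of_right _
      (Finset.prod_eq_zero (Finset.mem_erase.mpr ⟨hu, Finset.mem_univ u⟩) (if_neg hne))
  funext u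
  by_cases hu : u = t
  · subst hu; rw [Function.update_self]; exact h1
  · rw [Function.update_of_ne hu]; exact h2 u hu

private lemma gate_step (g : Gate n) (A : Matrix (Fin n → Fin 2) (Fin n → Fin 2) ℂ) :
    {x : (Fin n → Fin 2) × (Fin n → Fin 2) | (g.toMatrix * A * g.toMatrixᴴ) x.1 x.2 ≠ 0}.ncard ≤
      (if g.isH then 4 else 1) * {x : (Fin n → Fin 2) × (Fin n → Fin 2) | A x.1 x.2 ≠ 0}.ncard := by
  cases g with
  | Hg q =>
      simpa [Gate.isH, Gate.toMatrix] using
        h_bound (applyOn n Hmat q) A q (fun i k h => applyOn_H_prop q i k h)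
  | Sg q =>
      simpa [Gate.isH, Gate.toMatrix] using
        perm_bound (applyOn n Smat q) A id (fun i k h => diag_prop Smat Smat_offdiag q i k h)
  | Tg q =>
      simpa [Gate.isH, Gate.toMatrix] using
        perm_bound (applyOn n Tmat q) A id (fun i k h => diag_prop Tmat Tmat_offdiag q i k h)
  | CXg c t =>
      simpa [Gate.isH, Gate.toMatrix] using
        perm_bound (cxOn n c t) A (fun k => Function.update k t (k t + k c))
          (fun i k h => cx_prop c t i k h)

private lemma main_bound (L : List (Gate n)) (O : Matrix (Fin n → Fin 2) (Fin n → Fin 2) ℂ) :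
    {x : (Fin n → Fin 2) × (Fin n → Fin 2) |
        (circuitUnitary L * O * (circuitUnitary L)ᴴ) x.1 x.2 ≠ 0}.ncard ≤
      4 ^ (L.filter Gate.isH).length *
        {x : (Fin n → Fin 2) × (Fin n → Fin 2) | O x.1 x.2 ≠ 0}.ncard := by
  induction L with
  | nil => simp [circuitUnitary]
  | cons g L ih =>
      have hU : circuitUnitary (g :: L) = g.toMatrix * circuitUnitary L := by
        simp [circuitUnitary]
      have hconj : circuitUnitary (g :: L) * O * (circuitUnitary (g :: L))ᴴ
          = g.toMatrix * (circuitUnitary L * O * (circuitUnitary L)ᴴ) * g.toMatrixᴴ := by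
        rw [hU, Matrix.conjTranspose_mul]
        simp only [Matrix.mul_assoc]
      have hlen : ((g :: L).filter Gate.isH).length
          = (if g.isH then 1 else 0) + (L.filter Gate.isH).length := by
        cases hg : g.isH <;> simp [List.filter_cons, hg] <;> omega
      simp only [hconj]
      calc {x : (Fin n → Fin 2) × (Fin n → Fin 2) |
            (g.toMatrix * (circuitUnitary L * O * (circuitUnitary L)ᴴ) * g.toMatrixᴴ) x.1 x.2 ≠ 0}.ncard
          ≤ (if g.isH then 4 else 1) * {x : (Fin n → Fin 2) × (Fin n → Fin 2) |
              (circuitUnitary L * O * (circuitUnitary L)ᴴ) x.1 x.2 ≠ 0}.ncard :=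
            gate_step g _
        _ ≤ (if g.isH then 4 else 1) * (4 ^ (L.filter Gate.isH).length *
              {x : (Fin n → Fin 2) × (Fin n → Fin 2) | O x.1 x.2 ≠ 0}.ncard) :=
            Nat.mul_le_mul_left _ ih
        _ = 4 ^ ((g :: L).filter Gate.isH).length *
              {x : (Fin n → Fin 2) × (Fin n → Fin 2) | O x.1 x.2 ≠ 0}.ncard := by
            rw [hlen, pow_add]
            cases hg : g.isH <;> simp [hg, mul_assoc]

end Aux

/-- Hadamard-count bound on computational-basis support growth: if `U` is built from
a circuit over `{H, S, T, CX}` with `N_H` Hadamard gates, then the computational-basis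
support of the vectorization of `U O U†` (the nonzero entries of the matrix) has size at
most `4^{N_H}` times that of `|O⟩`; equivalently
`H_{CBC,0}((U⊗U*)|O⟩) ≤ 2 N_H + H_{CBC,0}(|O⟩)`. -/
theorem cbc_support_H_bound (n : ℕ) (L : List (Gate n))
    (O : Matrix (Fin n → Fin 2) (Fin n → Fin 2) ℂ) :
    Nat.card {x : (Fin n → Fin 2) × (Fin n → Fin 2) |
        (circuitUnitary L * O * (circuitUnitary L)ᴴ) x.1 x.2 ≠ 0}
      ≤ 4 ^ (L.filter Gate.isH).length *
        Nat.card {x : (Fin n → Fin 2) × (Fin n → Fin 2) | O x.1 x.2 ≠ 0} ∧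
    Real.logb 2 (Nat.card {x : (Fin n → Fin 2) × (Fin n → Fin 2) |
        (circuitUnitary L * O * (circuitUnitary L)ᴴ) x.1 x.2 ≠ 0})
      ≤ 2 * (L.filter Gate.isH).length +
        Real.logb 2 (Nat.card {x : (Fin n → Fin 2) × (Fin n → Fin 2) | O x.1 x.2 ≠ 0}) := by
  have part1nc := main_bound L O
  have part1 : Nat.card {x : (Fin n → Fin 2) × (Fin n → Fin 2) |
        (circuitUnitary L * O * (circuitUnitary L)ᴴ) x.1 x.2 ≠ 0}
      ≤ 4 ^ (L.filter Gate.isH).length *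
        Nat.card {x : (Fin n → Fin 2) × (Fin n → Fin 2) | O x.1 x.2 ≠ 0} := by
    rw [Nat.card_coe_set_eq, Nat.card_coe_set_eq]
    exact part1nc
  refine ⟨part1, ?_⟩
  set c := Nat.card {x : (Fin n → Fin 2) × (Fin n → Fin 2) |
      (circuitUnitary L * O * (circuitUnitary L)ᴴ) x.1 x.2 ≠ 0} with hcdef
  set m := Nat.card {x : (Fin n → Fin 2) × (Fin n → Fin 2) | O x.1 x.2 ≠ 0} with hmdef
  set k := (L.filter Gate.isH).length with hkdef
  by_cases hc0 : c = 0
  · rw [hc0]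
    simp only [Nat.cast_zero, Real.logb_zero]
    have h2k : (0:ℝ) ≤ 2 * (k:ℝ) := by positivity
    by_cases hm0 : m = 0
    · rw [hm0]
      simp only [Nat.cast_zero, Real.logb_zero]
      linarith
    · have hlog : (0:ℝ) ≤ Real.logb 2 (m:ℝ) :=
        Real.logb_nonneg one_lt_two (by exact_mod_cast Nat.one_le_iff_ne_zero.mpr hm0)
      linarith
  · have hm0 : m ≠ 0 := by
      intro h
      rw [h, mul_zero] at part1
      exact hc0 (Nat.le_zero.mp part1)
    have hc1 : (1:ℝ) ≤ (c:ℝ) := by exact_mod_cast Nat.one_le_iff_ne_zero.mpr hc0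
    have hm1 : (1:ℝ) ≤ (m:ℝ) := by exact_mod_cast Nat.one_le_iff_ne_zero.mpr hm0
    have hcast : (c:ℝ) ≤ 4 ^ k * (m:ℝ) := by exact_mod_cast part1
    have hlogb4 : Real.logb 2 4 = 2 := by
      rw [show (4:ℝ) = 2 ^ 2 by norm_num, Real.logb_pow]
      norm_num
    calc Real.logb 2 (c:ℝ) ≤ Real.logb 2 (4 ^ k * (m:ℝ)) :=
          Real.logb_le_logb_of_le one_lt_two (by linarith) hcast
      _ = Real.logb 2 ((4:ℝ) ^ k) + Real.logb 2 (m:ℝ) :=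
          Real.logb_mul (by positivity) (by exact ne_of_gt (by linarith))
      _ = (k:ℝ) * Real.logb 2 4 + Real.logb 2 (m:ℝ) := by rw [Real.logb_pow]
      _ = 2 * (k:ℝ) + Real.logb 2 (m:ℝ) := by rw [hlogb4]; ring
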